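/- In particular, ζ(2) = (π²/√105) · ∏_{p prime} (1 - 2/(p² + p^{-2}))^{-1/2}. -/

import Mathlib

/-!
With `x = p⁻²` the local factor is
`(1 - 2 / (p² + p⁻²))⁻¹ = (1 + x²) / (1 - x)² = (1 - x)⁻² (1 - x²)⁻¹ (1 - x⁴)`,
i.e. the product of the Euler factors of `ζ(2)² ζ(4) / ζ(8)` at `p`. Taking square roots of the
Euler products, the product over the primes equals `ζ(2) √(ζ(4) / ζ(8)) = ζ(2) √105 / π²`,
since `ζ(4) = π⁴ / 90` and `ζ(8) = π⁸ / 9450`.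
-/

noncomputable def realZeta (s : ℝ) : ℝ := ∑' n : ℕ, ((n : ℝ) + 1) ^ (-s)

open Real Finset

lemma HasProd.sqrt {ι : Type*} {f : ι → ℝ} {a : ℝ} (h : HasProd f a) (hf : ∀ i, 0 ≤ f i) :
    HasProd (fun i ↦ √(f i)) √a := by
  have := (continuous_sqrt.tendsto a).comp h
  simpa only [HasProd, Function.comp_def, sqrt_prod _ fun i _ ↦ hf i] using this

lemma realZeta_eq_tsum_rpow_neg {s : ℝ} (hs : s ≠ 0) :
    realZeta s = ∑' n : ℕ, (n : ℝ) ^ (-s) := by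
  by_cases h : Summable fun n : ℕ ↦ (n : ℝ) ^ (-s)
  · simp [h.tsum_eq_zero_add, realZeta, zero_rpow (neg_ne_zero.mpr hs)]
  · have h' : ¬Summable fun n : ℕ ↦ ((n : ℝ) + 1) ^ (-s) := by
      rw [← summable_nat_add_iff 1] at h
      exact_mod_cast h
    rw [realZeta, tsum_eq_zero_of_not_summable h, tsum_eq_zero_of_not_summable h']

lemma realZeta_natCast {k : ℕ} (hk : k ≠ 0) : realZeta k = ∑' n : ℕ, 1 / (n : ℝ) ^ k := by
  rw [realZeta_eq_tsum_rpow_neg (Nat.cast_ne_zero.mpr hk)]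
  congr 1 with n
  rw [rpow_neg n.cast_nonneg, rpow_natCast, one_div]

noncomputable def natRpowNegHom {s : ℝ} (hs : s ≠ 0) : ℕ →*₀ ℝ where
  toFun n := (n : ℝ) ^ (-s)
  map_zero' := by simp [zero_rpow (neg_ne_zero.mpr hs)]
  map_one' := by simp
  map_mul' m n := by simpa using mul_rpow m.cast_nonneg n.cast_nonneg

lemma realZeta_hasProd_euler {s : ℝ} (hs : 1 < s) :
    HasProd (fun p : Nat.Primes ↦ (1 - ((p : ℕ) : ℝ) ^ (-s))⁻¹) (realZeta s) := by
  have hs0 : s ≠ 0 := by positivity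
  have hsum : Summable fun n ↦ ‖natRpowNegHom hs0 n‖ := by
    simpa [natRpowNegHom, abs_of_nonneg (rpow_nonneg (Nat.cast_nonneg _) _)]
      using summable_nat_rpow.mpr (neg_lt_neg hs)
  rw [realZeta_eq_tsum_rpow_neg hs0]
  exact EulerProduct.eulerProduct_completely_multiplicative_hasProd hsum

lemma bernoulli_eight : bernoulli 8 = -1 / 30 := by
  have h5 : bernoulli' 5 = 0 := bernoulli'_eq_zero_of_odd (by decide) (by norm_num)
  have h7 : bernoulli' 7 = 0 := bernoulli'_eq_zero_of_odd (by decide) (by norm_num)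
  have h6 : bernoulli' 6 = 1 / 42 := by
    rw [bernoulli'_def]
    norm_num [sum_range_succ, Nat.choose, h5]
  rw [bernoulli_eq_bernoulli'_of_ne_one (by norm_num), bernoulli'_def]
  norm_num [sum_range_succ, Nat.choose, h5, h6, h7]

lemma realZeta_four : realZeta 4 = π ^ 4 / 90 := by
  simpa using (realZeta_natCast four_ne_zero).trans hasSum_zeta_four.tsum_eq

lemma realZeta_eight : realZeta 8 = π ^ 8 / 9450 := by
  have h := (realZeta_natCast (k := 2 * 4) (by norm_num)).trans
    (hasSum_zeta_nat four_ne_zero).tsum_eq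
  rw [bernoulli_eight] at h
  norm_num [Nat.factorial] at h
  rw [h]
  ring

lemma sqrt_realZeta_two_sq_mul_realZeta_four_div_realZeta_eight :
    √(realZeta 2 * realZeta 2 * realZeta 4 / realZeta 8) = realZeta 2 * √105 / π ^ 2 := by
  have hζ : 0 ≤ realZeta 2 := tsum_nonneg fun n ↦ rpow_nonneg (by positivity) _
  have h48 : realZeta 4 / realZeta 8 = 105 / (π ^ 2) ^ 2 := by
    rw [realZeta_four, realZeta_eight]
    field_simp
    norm_num
  rw [mul_div_assoc, sqrt_mul (mul_self_nonneg _), sqrt_mul_self hζ, h48,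
    sqrt_div' _ (by positivity), sqrt_sq (by positivity), mul_div_assoc]

lemma one_sub_two_div_inv_add (x : ℝ) : 1 - 2 / (x⁻¹ + x) = (1 - x) ^ 2 / (1 + x ^ 2) := by
  rcases eq_or_ne x 0 with rfl | hx
  · simp
  have : x⁻¹ + x ≠ 0 := by
    rw [show x⁻¹ + x = (1 + x ^ 2) / x by field_simp]
    exact div_ne_zero (by positivity) hx
  field_simp
  ring

lemma euler_factors_two_four_eight {x : ℝ} (hx : x ^ 2 ≠ 1) :
    (1 - x)⁻¹ * (1 - x)⁻¹ * (1 - x ^ 2)⁻¹ / (1 - x ^ 4)⁻¹ = (1 - 2 / (x⁻¹ + x))⁻¹ := by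
  have h1 : 1 - x ≠ 0 := fun h ↦ hx (by rw [← sub_eq_zero.mp h]; norm_num)
  have h2 : 1 - x ^ 2 ≠ 0 := sub_ne_zero.mpr (Ne.symm hx)
  have h4 : 1 - x ^ 4 ≠ 0 := by
    rw [show 1 - x ^ 4 = (1 - x ^ 2) * (1 + x ^ 2) by ring]
    exact mul_ne_zero h2 (by positivity)
  rw [one_sub_two_div_inv_add]
  field_simp
  ring

lemma euler_factors_two_four_eight_rpow {q : ℝ} (hq : 1 < q) :
    (1 - q ^ (-2 : ℝ))⁻¹ * (1 - q ^ (-2 : ℝ))⁻¹ * (1 - q ^ (-4 : ℝ))⁻¹ / (1 - q ^ (-8 : ℝ))⁻¹ =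
      (1 - 2 / (q ^ (2 : ℝ) + q ^ (-(2 : ℝ))))⁻¹ := by
  have hq0 : 0 ≤ q := by positivity
  have hpow (k : ℕ) : q ^ (-(2 * k : ℝ)) = (q ^ (-(2 : ℝ))) ^ k := by
    rw [← rpow_mul_natCast hq0, neg_mul]
  have hx : (q ^ (-(2 : ℝ))) ^ 2 ≠ 1 :=
    (pow_lt_one₀ (rpow_nonneg hq0 _) (rpow_lt_one_of_one_lt_of_neg hq (by norm_num))
      two_ne_zero).ne
  rw [show (-4 : ℝ) = -(2 * (2 : ℕ)) by norm_num, show (-8 : ℝ) = -(2 * (4 : ℕ)) by norm_num,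
    hpow, hpow, euler_factors_two_four_eight hx, rpow_neg hq0 2, inv_inv]

lemma one_sub_two_div_rpow_add_rpow_nonneg {q : ℝ} (hq : 0 ≤ q) :
    0 ≤ 1 - 2 / (q ^ (2 : ℝ) + q ^ (-(2 : ℝ))) := by
  rw [← inv_inv (q ^ (2 : ℝ)), ← rpow_neg hq, one_sub_two_div_inv_add]
  positivity

lemma rpow_neg_one_div_two_eq_sqrt_inv {x : ℝ} (hx : 0 ≤ x) : x ^ (-(1 : ℝ) / 2) = √x⁻¹ := by
  rw [neg_div, rpow_neg hx, sqrt_eq_rpow, inv_rpow hx]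

theorem stmt10 :
    realZeta 2 = Real.pi ^ 2 / Real.sqrt 105 *
      ∏' p : Nat.Primes,
        (1 - 2 / (((p : ℕ) : ℝ) ^ (2 : ℝ) + ((p : ℕ) : ℝ) ^ (-(2 : ℝ)))) ^ (-(1 : ℝ) / 2) := by
  have hprod := (((realZeta_hasProd_euler (s := 2) (by norm_num)).mul
    (realZeta_hasProd_euler (s := 2) (by norm_num))).mul
    (realZeta_hasProd_euler (s := 4) (by norm_num))).div₀
    (realZeta_hasProd_euler (s := 8) (by norm_num)) (by rw [realZeta_eight]; positivity)
  have hnonneg (p : Nat.Primes) := one_sub_two_div_rpow_add_rpow_nonneg (Nat.cast_nonneg (p : ℕ))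
  have hmain := (hprod.congr_fun fun p ↦ (euler_factors_two_four_eight_rpow
    (by exact_mod_cast p.prop.one_lt)).symm).sqrt fun p ↦ inv_nonneg.mpr (hnonneg p)
  simp only [← rpow_neg_one_div_two_eq_sqrt_inv (hnonneg _),
    sqrt_realZeta_two_sq_mul_realZeta_four_div_realZeta_eight] at hmain
  rw [hmain.tprod_eq]
  field_simp
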